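/- Let Ω₁,...,Ω_Δ be finite probability spaces and Ω = Ω₁ × ... × Ω_Δ their product. Let h : Ω → {0,1,...,Δ} and δ₁,...,δ_Δ ∈ [0,1/2]. Define Θᵢ = {y ∈ Ωᵢ : Pr_{z∼Ω}[h(z) = i | zᵢ = y] ≥ 1 - δᵢ} and θᵢ = Pr_{y∼Ωᵢ}[y ∈ Θᵢ]. Then there exists i* ∈ {1,...,Δ} such that Σ_{i ≠ i*} θᵢ ≤ 6e⁴·δ_{i*}. -/

import Mathlib

/-!
Let `E i` be the event that the `i`-th coordinate lies in `Θ i = goodValues μ h δ i`, and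
`A i` the event `h z = some i`, so that `θ i = P (E i)` and the `A i` are disjoint.
Conditioning on the `i`-th coordinate gives `P (E i \ A i) ≤ δ i * θ i`. Summing this over
the disjoint `A i` yields `∑ θ ≤ 1 + ∑ δ θ` and, since `E m` and `E i` are independent,
`θ m * ∑_{i ≠ m} θ i ≤ δ m θ m + ∑_{i ≠ m} δ i θ i`. Moreover the points at which exactly the
coordinates `i ≠ j` are good have probability at least `∏ (1 - θ k) * θ i * θ j`, and each of
them lies in `E i \ A i` or in `E j \ A j`; hence `∏ (1 - θ k) * ∑_{i ≠ j} θ i θ j ≤ 2 ∑ δ θ`.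

The rest is arithmetic. If some `θ m ≥ 1/2`, the second inequality makes `m` dominant. Otherwise
`∏ (1 - θ k) ≥ exp (-2 ∑ θ) ≥ exp (-4)`, and the third inequality forces some `i` with
`∑_{j ≠ i} θ j ≤ 6 e⁴ δ i`.
-/

open MeasureTheory Finset Function

theorem Real.exp_neg_two_mul_le_one_sub {x : ℝ} (hx₀ : 0 ≤ x) (hx : x ≤ 1 / 2) :
    Real.exp (-(2 * x)) ≤ 1 - x := by
  rw [Real.exp_neg, inv_le_iff_one_le_mul₀' (Real.exp_pos _)]
  nlinarith [Real.add_one_le_exp (2 * x)]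

theorem Real.exp_neg_two_mul_sum_le_prod_one_sub {ι : Type*} (s : Finset ι) {θ : ι → ℝ}
    (hθ₀ : ∀ i ∈ s, 0 ≤ θ i) (hθ : ∀ i ∈ s, θ i ≤ 1 / 2) :
    Real.exp (-(2 * ∑ i ∈ s, θ i)) ≤ ∏ i ∈ s, (1 - θ i) := by
  rw [mul_sum, ← sum_neg_distrib, Real.exp_sum]
  exact prod_le_prod (fun i _ => (Real.exp_pos _).le)
    fun i hi => Real.exp_neg_two_mul_le_one_sub (hθ₀ i hi) (hθ i hi)

theorem prod_one_sub_mul_le_prod_ite {ι : Type*} [Fintype ι] [DecidableEq ι] {θ : ι → ℝ}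
    (hθ₀ : ∀ i, 0 ≤ θ i) (hθ₁ : ∀ i, θ i ≤ 1) {i j : ι} (hij : i ≠ j) :
    (∏ k, (1 - θ k)) * (θ i * θ j) ≤ ∏ k, if k = i ∨ k = j then θ k else 1 - θ k := by
  have hpair : ∏ k, (if k = i ∨ k = j then θ k else 1) = θ i * θ j := by
    rw [← prod_filter, show univ.filter (fun k => k = i ∨ k = j) = {i, j} by ext; simp,
      prod_pair hij]
  rw [← hpair, mul_comm, ← prod_mul_distrib]
  refine prod_le_prod (fun k _ => ?_) fun k _ => ?_
  · split_ifs <;> nlinarith [hθ₀ k, hθ₁ k]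
  · split_ifs
    · nlinarith [hθ₀ k, hθ₁ k]
    · simp

section ExactPair

variable {X ι : Type*} {E : ι → Set X}

def exactPair (E : ι → Set X) (i j : ι) : Set X := {x | ∀ k, x ∈ E k ↔ k = i ∨ k = j}

theorem exactPair_comm (i j : ι) : exactPair E i j = exactPair E j i := by
  simp only [exactPair, or_comm]

theorem exactPair_subset (i j : ι) : exactPair E i j ⊆ E i :=
  fun _ hx => (hx i).2 (Or.inl rfl)

theorem pairwiseDisjoint_exactPair (i : ι) : Set.PairwiseDisjoint {i}ᶜ (exactPair E i) := by
  intro j hj j' hj' hjj'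
  refine Set.disjoint_left.2 fun x hx hx' => ?_
  rcases (hx' j).1 ((hx j).2 (Or.inr rfl)) with h | h
  exacts [hj h, hjj' h]

theorem measurableSet_exactPair [MeasurableSpace X] [Finite ι] (hE : ∀ i, MeasurableSet (E i))
    (i j : ι) : MeasurableSet (exactPair E i j) := by
  have : exactPair E i j = ⋂ k, {x | x ∈ E k ↔ k = i ∨ k = j} := by ext; simp [exactPair]
  rw [this]
  refine MeasurableSet.iInter fun k => ?_
  by_cases hk : k = i ∨ k = j
  · simpa [hk] using hE k
  · simpa [hk, Set.compl_def] using (hE k).compl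

end ExactPair

theorem pairwise_disjoint_preimage_some {α ι : Type*} (h : α → Option ι) :
    Pairwise (Disjoint on fun i => h ⁻¹' {some i}) :=
  (pairwise_disjoint_fiber h).comp_of_injective (Option.some_injective ι)

section DisjointTargets

variable {X ι : Type*} [MeasurableSpace X] (P : Measure X) [IsFiniteMeasure P] {E A : ι → Set X}

theorem sum_measureReal_inter_le (hA : Pairwise (Disjoint on A))
    (hAm : ∀ i, MeasurableSet (A i)) {B : Set X} (hB : MeasurableSet B) (s : Finset ι) :
    ∑ i ∈ s, P.real (B ∩ E i)
      ≤ P.real (B ∩ ⋃ i ∈ s, A i) + ∑ i ∈ s, P.real (E i \ A i) := by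
  have hsplit : ∀ i, P.real (B ∩ E i) ≤ P.real (B ∩ A i) + P.real (E i \ A i) := by
    intro i
    refine (measureReal_mono fun x hx => ?_).trans (measureReal_union_le _ _)
    by_cases hxA : x ∈ A i
    exacts [Or.inl ⟨hx.1, hxA⟩, Or.inr ⟨hx.2, hxA⟩]
  rw [Set.inter_iUnion₂, measureReal_biUnion_finset
    (fun i _ j _ hij => (hA hij).mono Set.inter_subset_right Set.inter_subset_right)
    fun i _ => hB.inter (hAm i), ← sum_add_distrib]
  exact sum_le_sum fun i _ => hsplit i

theorem sum_sum_measureReal_exactPair_le [Fintype ι] [DecidableEq ι]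
    (hE : ∀ i, MeasurableSet (E i)) (hA : Pairwise (Disjoint on A))
    (hAm : ∀ i, MeasurableSet (A i)) :
    ∑ i, ∑ j ∈ univ.erase i, P.real (exactPair E i j) ≤ 2 * ∑ i, P.real (E i \ A i) := by
  have hsplit : ∀ i j, i ≠ j → P.real (exactPair E i j)
      ≤ P.real (exactPair E i j \ A i) + P.real (exactPair E j i \ A j) := by
    intro i j hij
    refine (measureReal_mono fun x hx => ?_).trans (measureReal_union_le _ _)
    by_cases hxA : x ∈ A i
    · exact Or.inr ⟨exactPair_comm i j ▸ hx, Set.disjoint_left.1 (hA hij) hxA⟩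
    · exact Or.inl ⟨hx, hxA⟩
  have hfiber : ∀ i, ∑ j ∈ univ.erase i, P.real (exactPair E i j \ A i)
      ≤ P.real (E i \ A i) := by
    intro i
    rw [← measureReal_biUnion_finset _ fun j _ => (measurableSet_exactPair hE i j).diff (hAm i)]
    · exact measureReal_mono (Set.iUnion₂_subset fun j _ =>
        Set.sdiff_subset_sdiff_left (exactPair_subset i j))
    · rw [coe_erase, coe_univ, ← Set.compl_eq_univ_sdiff]
      exact (pairwiseDisjoint_exactPair i).mono_on fun j _ => Set.sdiff_subset
  calc ∑ i, ∑ j ∈ univ.erase i, P.real (exactPair E i j)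
      ≤ ∑ i, ∑ j ∈ univ.erase i,
          (P.real (exactPair E i j \ A i) + P.real (exactPair E j i \ A j)) :=
        sum_le_sum fun i _ => sum_le_sum fun j hj => hsplit i j (ne_of_mem_erase hj).symm
    _ = 2 * ∑ i, ∑ j ∈ univ.erase i, P.real (exactPair E i j \ A i) := by
        simp_rw [sum_add_distrib]
        rw [sum_comm' (t' := univ) (s' := fun j => univ.erase j) (by simp [ne_comm])]
        ring
    _ ≤ 2 * ∑ i, P.real (E i \ A i) := by gcongr with i; exact hfiber i

end DisjointTargets

section ProductMeasure

variable {ι : Type*} [Fintype ι] [DecidableEq ι] {Ω : ι → Type*} [∀ i, MeasurableSpace (Ω i)]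
  (μ : ∀ i, Measure (Ω i))

theorem lintegral_pi_eq_lintegral_lintegral_update [∀ i, SigmaFinite (μ i)] (i : ι)
    [IsProbabilityMeasure (μ i)] {f : (∀ j, Ω j) → ENNReal} (hf : Measurable f) :
    ∫⁻ x, f x ∂Measure.pi μ = ∫⁻ y, ∫⁻ x, f (update x i y) ∂Measure.pi μ ∂μ i := by
  rw [← lintegral_lintegral_swap (f := fun x y => f (update x i y))
    (hf.comp measurable_update').aemeasurable]
  refine lintegral_eq_of_lmarginal_eq {i} hf ?_ ?_
  · simpa only [lmarginal_singleton] using hf.lmarginal μ (s := {i})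
  · ext x
    simp [lmarginal_singleton]

theorem pi_inter_preimage_eval_eq_setLIntegral [∀ i, SigmaFinite (μ i)] (i : ι)
    [IsProbabilityMeasure (μ i)] {T : Set (Ω i)} {S : Set (∀ j, Ω j)} (hT : MeasurableSet T)
    (hS : MeasurableSet S) :
    Measure.pi μ (eval i ⁻¹' T ∩ S) = ∫⁻ y in T, Measure.pi μ {x | update x i y ∈ S} ∂μ i := by
  have hm : MeasurableSet (eval i ⁻¹' T ∩ S) := (measurable_pi_apply i hT).inter hS
  rw [← lintegral_indicator_one hm, lintegral_pi_eq_lintegral_lintegral_update μ i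
    (measurable_one.indicator hm), ← lintegral_indicator hT]
  refine lintegral_congr fun y => ?_
  by_cases hy : y ∈ T
  · have hpre : (update · i y) ⁻¹' (eval i ⁻¹' T ∩ S) = (update · i y) ⁻¹' S := by
      ext x; simp [hy]
    rw [Set.indicator_of_mem hy]
    simp_rw [← Set.indicator_comp_right (update · i y), hpre]
    exact lintegral_indicator_one (measurable_update_left hS)
  · simp [hy]

theorem pi_inter_preimage_eval_of_update_mem_iff [∀ i, SigmaFinite (μ i)] (i : ι)
    [IsProbabilityMeasure (μ i)] {T : Set (Ω i)} {S : Set (∀ j, Ω j)} (hT : MeasurableSet T)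
    (hS : MeasurableSet S) (hSi : ∀ x y, update x i y ∈ S ↔ x ∈ S) :
    Measure.pi μ (eval i ⁻¹' T ∩ S) = μ i T * Measure.pi μ S := by
  simp_rw [pi_inter_preimage_eval_eq_setLIntegral μ i hT hS, hSi, Set.ofPred_mem_eq,
    setLIntegral_const, mul_comm]

variable [∀ i, IsProbabilityMeasure (μ i)]

theorem measureReal_pi_preimage_eval_inter_preimage_eval {i j : ι} (hij : i ≠ j)
    {T : Set (Ω i)} {T' : Set (Ω j)} (hT : MeasurableSet T) (hT' : MeasurableSet T') :
    (Measure.pi μ).real (eval i ⁻¹' T ∩ eval j ⁻¹' T') = (μ i).real T * (μ j).real T' := by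
  rw [measureReal_def, pi_inter_preimage_eval_of_update_mem_iff μ i hT
      (measurable_pi_apply j hT') fun x y => by simp [update_of_ne hij.symm],
    ENNReal.toReal_mul, (measurePreserving_eval μ j).measure_preimage hT'.nullMeasurableSet]
  rfl

theorem measureReal_pi_exactPair {Θ : ∀ i, Set (Ω i)} (hΘ : ∀ i, MeasurableSet (Θ i))
    (i j : ι) :
    (Measure.pi μ).real (exactPair (fun k => eval k ⁻¹' Θ k) i j)
      = ∏ k, if k = i ∨ k = j then (μ k).real (Θ k) else 1 - (μ k).real (Θ k) := by
  have hpi : exactPair (fun k => eval k ⁻¹' Θ k) i j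
      = Set.univ.pi fun k => if k = i ∨ k = j then Θ k else (Θ k)ᶜ := by
    ext x
    simp only [exactPair, Set.mem_preimage, eval, Set.mem_pi, Set.mem_univ, true_implies]
    refine forall_congr' fun k => ?_
    split_ifs with hk <;> simp [hk]
  simp only [hpi, measureReal_def, Measure.pi_pi, ENNReal.toReal_prod]
  refine prod_congr rfl fun k _ => ?_
  split_ifs
  · rfl
  · exact probReal_compl_eq_one_sub (hΘ k)

end ProductMeasure

section GoodValues

variable {ι : Type*} [Fintype ι] [DecidableEq ι] {Ω : ι → Type*} [∀ i, MeasurableSpace (Ω i)]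
  [∀ i, Countable (Ω i)] [∀ i, MeasurableSingletonClass (Ω i)]
  (μ : ∀ i, Measure (Ω i)) [∀ i, IsProbabilityMeasure (μ i)] (h : (∀ i, Ω i) → Option ι)
  (δ : ι → ℝ)

def goodValues (i : ι) : Set (Ω i) :=
  {y | 1 - δ i ≤ (Measure.pi μ).real {z | h (update z i y) = some i}}

theorem measureReal_preimage_goodValues_diff_le (i : ι) (hδ : 0 ≤ δ i) :
    (Measure.pi μ).real (eval i ⁻¹' goodValues μ h δ i \ h ⁻¹' {some i})
      ≤ δ i * (μ i).real (goodValues μ h δ i) := by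
  have hmiss : ∀ y ∈ goodValues μ h δ i,
      Measure.pi μ {x | update x i y ∈ (h ⁻¹' {some i})ᶜ} ≤ ENNReal.ofReal (δ i) := by
    intro y hy
    rw [← ofReal_measureReal]
    refine ENNReal.ofReal_le_ofReal ?_
    have hcompl := probReal_compl_eq_one_sub (μ := Measure.pi μ)
      (MeasurableSet.of_discrete (s := {x | h (update x i y) = some i}))
    simp only [goodValues, Set.mem_ofPred_eq] at hy
    exact hcompl.le.trans (by linarith)
  rw [Set.sdiff_eq, measureReal_def,
    pi_inter_preimage_eval_eq_setLIntegral μ i .of_discrete .of_discrete]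
  calc (∫⁻ y in goodValues μ h δ i,
          Measure.pi μ {x | update x i y ∈ (h ⁻¹' {some i})ᶜ} ∂μ i).toReal
      ≤ (∫⁻ _ in goodValues μ h δ i, ENNReal.ofReal (δ i) ∂μ i).toReal :=
        ENNReal.toReal_mono (by rw [setLIntegral_const]; finiteness)
          (setLIntegral_mono measurable_const hmiss)
    _ = δ i * (μ i).real (goodValues μ h δ i) := by
        rw [setLIntegral_const, ENNReal.toReal_mul, ENNReal.toReal_ofReal hδ, measureReal_def]

variable {μ h δ}

theorem sum_measureReal_goodValues_le (hδ : ∀ i, 0 ≤ δ i) :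
    ∑ i, (μ i).real (goodValues μ h δ i)
      ≤ 1 + ∑ i, δ i * (μ i).real (goodValues μ h δ i) := by
  have hcover := sum_measureReal_inter_le (Measure.pi μ)
    (E := fun i => eval i ⁻¹' goodValues μ h δ i) (pairwise_disjoint_preimage_some h)
    (fun _ => .of_discrete) .univ univ
  have hE : ∀ i, (Measure.pi μ).real (eval i ⁻¹' goodValues μ h δ i)
      = (μ i).real (goodValues μ h δ i) := fun i =>
    (measurePreserving_eval μ i).measureReal_preimage MeasurableSet.of_discrete.nullMeasurableSet
  simp only [Set.univ_inter, hE] at hcover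
  linarith [measureReal_le_one (μ := Measure.pi μ) (s := ⋃ i ∈ univ, h ⁻¹' {some i}),
    sum_le_sum fun i (_ : i ∈ univ) => measureReal_preimage_goodValues_diff_le μ h δ i (hδ i)]

theorem measureReal_goodValues_mul_sum_le (hδ : ∀ i, 0 ≤ δ i) (m : ι) :
    (μ m).real (goodValues μ h δ m) * ∑ i ∈ univ.erase m, (μ i).real (goodValues μ h δ i)
      ≤ δ m * (μ m).real (goodValues μ h δ m)
        + ∑ i ∈ univ.erase m, δ i * (μ i).real (goodValues μ h δ i) := by
  have hcover := sum_measureReal_inter_le (Measure.pi μ)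
    (E := fun i => eval i ⁻¹' goodValues μ h δ i) (pairwise_disjoint_preimage_some h)
    (fun _ => .of_discrete) (B := eval m ⁻¹' goodValues μ h δ m) .of_discrete (univ.erase m)
  have hothers : (Measure.pi μ).real
      (eval m ⁻¹' goodValues μ h δ m ∩ ⋃ i ∈ univ.erase m, h ⁻¹' {some i})
      ≤ (Measure.pi μ).real (eval m ⁻¹' goodValues μ h δ m \ h ⁻¹' {some m}) := by
    refine measureReal_mono fun x ⟨hxm, hx⟩ => ⟨hxm, ?_⟩
    obtain ⟨i, hi, hxi⟩ := Set.mem_iUnion₂.1 hx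
    exact Set.disjoint_left.1 (pairwise_disjoint_preimage_some h (ne_of_mem_erase hi)) hxi
  rw [sum_congr rfl fun i hi => measureReal_pi_preimage_eval_inter_preimage_eval μ
    (ne_of_mem_erase hi).symm .of_discrete .of_discrete, ← mul_sum] at hcover
  linarith [measureReal_preimage_goodValues_diff_le μ h δ m (hδ m),
    sum_le_sum fun i (_ : i ∈ univ.erase m) =>
      measureReal_preimage_goodValues_diff_le μ h δ i (hδ i)]

theorem prod_one_sub_mul_sum_measureReal_goodValues_le (hδ : ∀ i, 0 ≤ δ i) :
    (∏ k, (1 - (μ k).real (goodValues μ h δ k)))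
        * ∑ i, (μ i).real (goodValues μ h δ i)
          * ∑ j ∈ univ.erase i, (μ j).real (goodValues μ h δ j)
      ≤ 2 * ∑ i, δ i * (μ i).real (goodValues μ h δ i) := by
  calc _ = ∑ i, ∑ j ∈ univ.erase i, (∏ k, (1 - (μ k).real (goodValues μ h δ k)))
          * ((μ i).real (goodValues μ h δ i) * (μ j).real (goodValues μ h δ j)) := by
        simp only [mul_sum]
    _ ≤ ∑ i, ∑ j ∈ univ.erase i, (Measure.pi μ).real
          (exactPair (fun k => eval k ⁻¹' goodValues μ h δ k) i j) := by
        refine sum_le_sum fun i _ => sum_le_sum fun j hj => ?_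
        rw [measureReal_pi_exactPair μ fun _ => .of_discrete]
        exact prod_one_sub_mul_le_prod_ite (fun _ => measureReal_nonneg)
          (fun k => measureReal_le_one (μ := μ k)) (ne_of_mem_erase hj).symm
    _ ≤ 2 * ∑ i, (Measure.pi μ).real (eval i ⁻¹' goodValues μ h δ i \ h ⁻¹' {some i}) :=
        sum_sum_measureReal_exactPair_le _ (fun _ => .of_discrete)
          (pairwise_disjoint_preimage_some h) fun _ => .of_discrete
    _ ≤ 2 * ∑ i, δ i * (μ i).real (goodValues μ h δ i) := by
        gcongr with i
        exact measureReal_preimage_goodValues_diff_le μ h δ i (hδ i)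

end GoodValues

section Arithmetic

variable {ι : Type*} [Fintype ι] [DecidableEq ι] {θ δ : ι → ℝ}

theorem sum_erase_le_of_half_le {C : ℝ} (hC : 6 ≤ C) (hθ₀ : ∀ i, 0 ≤ θ i)
    (hδ₀ : ∀ i, 0 ≤ δ i) (hδ : ∀ i, C * δ i ≤ 2) {m : ι} (hm : 1 / 2 ≤ θ m) (hm₁ : θ m ≤ 1)
    (hpair : θ m * ∑ i ∈ univ.erase m, θ i ≤ δ m * θ m + ∑ i ∈ univ.erase m, δ i * θ i) :
    ∑ i ∈ univ.erase m, θ i ≤ C * δ m := by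
  set S := ∑ i ∈ univ.erase m, θ i
  have hS : 0 ≤ S := sum_nonneg fun i _ => hθ₀ i
  have hC₀ : 0 ≤ C := by linarith
  have hrest : C * ∑ i ∈ univ.erase m, δ i * θ i ≤ 2 * S := by
    rw [mul_sum, mul_sum]
    exact sum_le_sum fun i _ => by nlinarith [hθ₀ i, hδ i]
  have hCδ : C * δ m * θ m ≤ C * δ m := mul_le_of_le_one_right (mul_nonneg hC₀ (hδ₀ m)) hm₁
  have hlow : C * (1 / 2 * S) ≤ C * (θ m * S) :=
    mul_le_mul_of_nonneg_left (mul_le_mul_of_nonneg_right hm hS) hC₀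
  nlinarith [mul_le_mul_of_nonneg_left hpair hC₀, mul_nonneg (by linarith : 0 ≤ C / 2 - 3) hS]

theorem exists_sum_erase_le_of_le_half [Nonempty ι] (hθ₀ : ∀ i, 0 ≤ θ i)
    (hθ : ∀ i, θ i ≤ 1 / 2) (hδ₀ : ∀ i, 0 ≤ δ i) (hsum : ∑ i, θ i ≤ 2)
    (hpairs : (∏ k, (1 - θ k)) * ∑ i, θ i * ∑ j ∈ univ.erase i, θ j ≤ 2 * ∑ i, δ i * θ i) :
    ∃ i₀, ∑ i ∈ univ.erase i₀, θ i ≤ 6 * Real.exp 4 * δ i₀ := by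
  by_contra! hlt
  obtain ⟨k, hk⟩ : ∃ k, 0 < θ k := by
    by_contra! hzero
    obtain ⟨i⟩ := ‹Nonempty ι›
    have := hlt i
    rw [sum_eq_zero fun j _ => le_antisymm (hzero j) (hθ₀ j)] at this
    nlinarith [Real.exp_pos 4, hδ₀ i]
  have hG : Real.exp (-4) ≤ ∏ k, (1 - θ k) :=
    (Real.exp_le_exp.2 (by linarith)).trans
      (Real.exp_neg_two_mul_sum_le_prod_one_sub _ (fun i _ => hθ₀ i) fun i _ => hθ i)
  set Q := ∑ i, θ i * ∑ j ∈ univ.erase i, θ j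
  have hQ : 6 * Real.exp 4 * ∑ i, δ i * θ i < Q := by
    rw [mul_sum]
    refine sum_lt_sum (fun i _ => ?_) ⟨k, mem_univ k, ?_⟩
    · nlinarith [hlt i, hθ₀ i]
    · nlinarith [hlt k]
  have hQ₀ : 0 ≤ Q := sum_nonneg fun i _ => mul_nonneg (hθ₀ i) (sum_nonneg fun j _ => hθ₀ j)
  have hX : 0 ≤ ∑ i, δ i * θ i := sum_nonneg fun i _ => mul_nonneg (hδ₀ i) (hθ₀ i)
  have he : Real.exp (-4) * Real.exp 4 = 1 := by rw [← Real.exp_add]; norm_num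
  nlinarith [mul_le_mul_of_nonneg_right hG hQ₀, Real.exp_pos 4, Real.exp_pos (-4)]

theorem exists_sum_erase_le_of_overlap_bounds [Nonempty ι] (hθ₀ : ∀ i, 0 ≤ θ i)
    (hθ₁ : ∀ i, θ i ≤ 1) (hδ₀ : ∀ i, 0 ≤ δ i) (hδ : ∀ i, δ i ≤ 1 / 2)
    (hcover : ∑ i, θ i ≤ 1 + ∑ i, δ i * θ i)
    (hpair : ∀ m, θ m * ∑ i ∈ univ.erase m, θ i ≤ δ m * θ m + ∑ i ∈ univ.erase m, δ i * θ i)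
    (hpairs : (∏ k, (1 - θ k)) * ∑ i, θ i * ∑ j ∈ univ.erase i, θ j ≤ 2 * ∑ i, δ i * θ i) :
    ∃ i₀, ∑ i ∈ univ.erase i₀, θ i ≤ 6 * Real.exp 4 * δ i₀ := by
  have hsum : ∑ i, θ i ≤ 2 := by
    have : ∑ i, δ i * θ i ≤ ∑ i, θ i / 2 := sum_le_sum fun i _ => by nlinarith [hθ₀ i, hδ i]
    rw [← sum_div] at this
    linarith
  have hC : 6 ≤ 6 * Real.exp 4 := by nlinarith [Real.one_le_exp (by norm_num : (0 : ℝ) ≤ 4)]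
  by_cases hbig : ∃ i, 2 ≤ 6 * Real.exp 4 * δ i
  · obtain ⟨i, hi⟩ := hbig
    refine ⟨i, le_trans ?_ (hsum.trans hi)⟩
    exact sum_le_sum_of_subset_of_nonneg (erase_subset i univ) fun j _ _ => hθ₀ j
  push Not at hbig
  by_cases hheavy : ∃ m, 1 / 2 ≤ θ m
  · obtain ⟨m, hm⟩ := hheavy
    exact ⟨m, sum_erase_le_of_half_le hC hθ₀ hδ₀ (fun i => (hbig i).le) hm (hθ₁ m) (hpair m)⟩
  push Not at hheavy
  exact exists_sum_erase_le_of_le_half hθ₀ (fun i => (hheavy i).le) hδ₀ hsum hpairs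

end Arithmetic

theorem dominant_direction {Δ : ℕ} (hΔ : 0 < Δ)
    (Ω : Fin Δ → Type*) [∀ i, Fintype (Ω i)]
    [∀ i, MeasurableSpace (Ω i)] [∀ i, MeasurableSingletonClass (Ω i)]
    (μ : ∀ i, Measure (Ω i)) [∀ i, IsProbabilityMeasure (μ i)]
    (h : (∀ i, Ω i) → Option (Fin Δ))
    (δv : Fin Δ → ℝ) (hδ : ∀ i, δv i ∈ Set.Icc (0 : ℝ) (1 / 2)) :
    ∃ i₀ : Fin Δ, ∑ i ∈ Finset.univ.erase i₀,
        ((μ i) {y | 1 - δv i ≤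
          ((Measure.pi μ) {z | h (Function.update z i y) = some i}).toReal}).toReal
      ≤ 6 * Real.exp 4 * δv i₀ := by
  have := Fin.pos_iff_nonempty.1 hΔ
  have hδ₀ : ∀ i, 0 ≤ δv i := fun i => (hδ i).1
  exact exists_sum_erase_le_of_overlap_bounds (fun _ => measureReal_nonneg)
    (fun _ => measureReal_le_one) hδ₀ (fun i => (hδ i).2)
    (sum_measureReal_goodValues_le hδ₀) (measureReal_goodValues_mul_sum_le hδ₀)
    (prod_one_sub_mul_sum_measureReal_goodValues_le hδ₀)
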